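/- Define strings over the stack alphabet by recursion and consider the dpda for L_s from the paper. Then for each i with 0 ≤ i ≤ s−1, the dpda satisfies (q1, a^{2^i}, A_i) ⊢* (q2, ε, ε) and (q1, a^{2^i}, B_i) ⊢* (q3, ε, ε). -/
import Mathlib


/-- States of the dpda `M_s` for `L_s = {a^{2^s}}^*`. -/
inductive MSt where
  | q0 | q1 | q2 | q3
deriving DecidableEq

/-- Stack symbols of `M_s`: `Z0`, `A i`, `B i` (with `i ≤ s-1`). -/
inductive MSym where
  | Z0
  | A (i : ℕ)
  | B (i : ℕ)
deriving DecidableEq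

/-- One move of the dpda `M_s` of the paper. Configurations are
`(state, remaining input length, stack)` with the stack top leftmost;
reading consumes one input symbol `a`. -/
inductive MStep (s : ℕ) : MSt × ℕ × List MSym → MSt × ℕ × List MSym → Prop
  | start (n γ) :
      MStep s (.q0, n, .Z0 :: γ) (.q1, n, .A (s - 1) :: .Z0 :: γ)
  | readA (n γ) : MStep s (.q1, n + 1, .A 0 :: γ) (.q3, n, .A 0 :: γ)
  | readB (n γ) : MStep s (.q1, n + 1, .B 0 :: γ) (.q3, n, .B 0 :: γ)
  | pushAA (n γ i) : 1 ≤ i → i ≤ s - 1 →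
      MStep s (.q1, n, .A i :: γ) (.q1, n, .A (i - 1) :: .A i :: γ)
  | pushAB (n γ i) : 1 ≤ i → i ≤ s - 1 →
      MStep s (.q1, n, .B i :: γ) (.q1, n, .A (i - 1) :: .B i :: γ)
  | pushBA (n γ i) : 1 ≤ i → i ≤ s - 1 →
      MStep s (.q2, n, .A i :: γ) (.q1, n, .B (i - 1) :: .A i :: γ)
  | pushBB (n γ i) : 1 ≤ i → i ≤ s - 1 →
      MStep s (.q2, n, .B i :: γ) (.q1, n, .B (i - 1) :: .B i :: γ)
  | popA (n γ i) : i ≤ s - 1 → MStep s (.q3, n, .A i :: γ) (.q2, n, γ)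
  | popB (n γ i) : i ≤ s - 1 → MStep s (.q3, n, .B i :: γ) (.q3, n, γ)
  | wrap (n γ) :
      MStep s (.q2, n, .Z0 :: γ) (.q1, n, .B (s - 1) :: .Z0 :: γ)
  | finish (n γ) : MStep s (.q3, n, .Z0 :: γ) (.q0, n, .Z0 :: γ)

lemma stmt_8_aux (s : ℕ) :
    ∀ i ≤ s - 1, ∀ n γ,
      Relation.ReflTransGen (MStep s) (.q1, n + 2 ^ i, .A i :: γ) (.q2, n, γ) ∧
      Relation.ReflTransGen (MStep s) (.q1, n + 2 ^ i, .B i :: γ) (.q3, n, γ) := by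
  intro i
  induction i with
  | zero =>
    intro hi n γ
    constructor
    · exact .tail (.single (MStep.readA n γ)) (MStep.popA n γ 0 (Nat.zero_le _))
    · exact .tail (.single (MStep.readB n γ)) (MStep.popB n γ 0 (Nat.zero_le _))
  | succ i ih =>
    intro hi n γ
    have hi' : i ≤ s - 1 := Nat.le_of_succ_le hi
    have h1 : 1 ≤ i + 1 := Nat.succ_le_succ (Nat.zero_le _)
    have hpow : n + 2 ^ (i + 1) = (n + 2 ^ i) + 2 ^ i := by ring
    have hred : i + 1 - 1 = i := rfl
    constructor
    · rw [hpow]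
      have := MStep.pushAA (s := s) ((n + 2 ^ i) + 2 ^ i) γ (i+1) h1 hi
      rw [hred] at this
      refine Relation.ReflTransGen.head this ?_
      refine ((ih hi' (n + 2 ^ i) (MSym.A (i+1) :: γ)).1).trans ?_
      have := MStep.pushBA (s := s) (n + 2 ^ i) γ (i+1) h1 hi
      rw [hred] at this
      refine Relation.ReflTransGen.head this ?_
      refine ((ih hi' n (MSym.A (i+1) :: γ)).2).trans ?_
      exact .single (MStep.popA n γ (i+1) hi)
    · rw [hpow]
      have := MStep.pushAB (s := s) ((n + 2 ^ i) + 2 ^ i) γ (i+1) h1 hi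
      rw [hred] at this
      refine Relation.ReflTransGen.head this ?_
      refine ((ih hi' (n + 2 ^ i) (MSym.B (i+1) :: γ)).1).trans ?_
      have := MStep.pushBB (s := s) (n + 2 ^ i) γ (i+1) h1 hi
      rw [hred] at this
      refine Relation.ReflTransGen.head this ?_
      refine ((ih hi' n (MSym.B (i+1) :: γ)).2).trans ?_
      exact .single (MStep.popB n γ (i+1) hi)

/-- for each `0 ≤ i ≤ s-1`, the dpda `M_s` satisfies
`(q1, a^{2^i}, A_i) ⊢* (q2, ε, ε)` and `(q1, a^{2^i}, B_i) ⊢* (q3, ε, ε)`. -/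
theorem stmt_8 (s : ℕ) (hs : 0 < s) :
    ∀ i ≤ s - 1,
      Relation.ReflTransGen (MStep s) (.q1, 2 ^ i, [.A i]) (.q2, 0, []) ∧
      Relation.ReflTransGen (MStep s) (.q1, 2 ^ i, [.B i]) (.q3, 0, []) := by
  intro i hi
  have := stmt_8_aux s i hi 0 []
  simpa using this
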